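/- arXiv:1803.07953 — 8 statements merged into one kernel-verified Lean document; each statement's English description precedes it below -/
import Mathlib

section
/- Let C be a commutative ring and let A be a commutative C-algebra that is 2-torsion free (i.e., 2a = 0 implies a = 0 for a ∈ A). If f, g, h : A → A are C-linear maps and f is a Jordan left {g,h}-derivation, then f is a left {g,h}-derivation. -/
theorem eq_of_two_nsmul_eq_two_nsmul {M : Type*} [AddCommGroup M]
    (htf : ∀ a : M, 2 • a = 0 → a = 0) {x y : M} (hxy : 2 • x = 2 • y) : x = y :=
  sub_eq_zero.mp <| htf _ <| by rw [nsmul_sub, hxy, sub_self]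

/-- In a commutative ring `a * b + b * a = 2 • (a * b)`, so the Jordan identity is twice the
left `{g,h}`-derivation identity, and `2` can be cancelled. -/
theorem map_mul_of_jordan_of_comm_two_torsion_free {A F : Type*} [CommRing A] [FunLike F A A]
    [AddHomClass F A A] (htf : ∀ a : A, 2 • a = 0 → a = 0) (f : F) (g h : A → A)
    (hf : ∀ a b : A, f (a * b + b * a) = 2 • (a * g b + b * h a)) (a b : A) :
    f (a * b) = a * g b + b * h a :=
  eq_of_two_nsmul_eq_two_nsmul htf <| by
    rw [two_nsmul, ← map_add, ← hf a b, mul_comm b a]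

/-- If `A` is a commutative 2-torsion free algebra over a commutative ring `C`,
then every Jordan left `{g,h}`-derivation on `A` is a left `{g,h}`-derivation. -/
theorem jordan_left_gh_derivation_of_comm_two_torsion_free
    {C A : Type*} [CommRing C] [CommRing A] [Algebra C A]
    (htf : ∀ a : A, 2 • a = 0 → a = 0)
    (f g h : A →ₗ[C] A)
    (hf : ∀ a b : A, f (a * b + b * a) = 2 • (a * g b + b * h a)) :
    ∀ a b : A, f (a * b) = a * g b + b * h a ∧ f (a * b) = a * h b + b * g a := by
  have hleft := map_mul_of_jordan_of_comm_two_torsion_free htf f g h hf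
  intro a b
  refine ⟨hleft a b, ?_⟩
  rw [mul_comm a b, hleft b a, add_comm]
end

section
/- Let C be a 2-torsion free commutative ring with unity, let n ≥ 2, and let T_n(C) denote the algebra of n×n upper triangular matrices over C. Linear maps f, g, h : T_n(C) → T_n(C) form a Jordan left {g,h}-derivation triple (i.e., f is a Jordan left {g,h}-derivation) if and only if there exist upper triangular matrices α, β ∈ T_n(C) such that β − α has all entries outside the first row equal to zero, g(A) = Aα and h(A) = Aβ for all A ∈ T_n(C), and f = g + h. -/
/-!
Put `α = g 1` and `β = h 1`. Taking `a = 1` or `b = 1` in the defining identity gives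
`f b = g b + b β` and `f a = a α + h a`, and then `d = f - (· * (α + β))` satisfies
`d (a a) = 2 a d(a)`. Such a map kills every idempotent `e`: `d e = 2 e d(e)` forces `e d(e) = 0`.
The idempotents `E_ii` and `E_ii + E_ij` span `T_n(C)`, so `d = 0`, i.e. `f = (· * (α + β))`,
`g = (· * α)`, `h = (· * β)`, and the defining identity reduces to `(ab - ba)(β - α) = 0`.
Commutators of upper triangular matrices have zero first column, while
`E_11 E_1j - E_1j E_11 = E_1j`; so this holds for all `a, b` exactly when `β - α` vanishes
outside the first row.
-/

/-- The algebra `T_n(C)` of `n × n` upper triangular matrices over `C`,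
as a subalgebra of `Matrix (Fin n) (Fin n) C`. -/
def upperTriangularAlgebra (n : ℕ) (C : Type*) [CommRing C] :
    Subalgebra C (Matrix (Fin n) (Fin n) C) where
  carrier := {A | A.BlockTriangular (id : Fin n → Fin n)}
  mul_mem' ha hb := ha.mul hb
  add_mem' ha hb := ha.add hb
  algebraMap_mem' r := by
    intro i j hij
    have hij' : i ≠ j := ne_of_gt hij
    rw [Matrix.algebraMap_matrix_apply, if_neg hij']

section JordanLeftDerivation

variable {C A : Type*} [CommSemiring C] [Ring A] [Algebra C A]

def IsJordanLeftDerivation (f g h : A →ₗ[C] A) : Prop :=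
  ∀ a b : A, f (a * b + b * a) = 2 • (a * g b + b * h a)

theorem map_eq_zero_of_isIdempotentElem_of_map_mul_self {d : A →+ A}
    (hd : ∀ a, d (a * a) = 2 • (a * d a)) {e : A} (he : IsIdempotentElem e) : d e = 0 := by
  have hde : d e = 2 • (e * d e) := by rw [← hd, he.eq]
  have hede : e * d e = 0 := by
    have : e * d e = 2 • (e * d e) := by
      conv_lhs => rw [hde]
      rw [mul_smul_comm, ← mul_assoc, he.eq]
    rwa [two_smul, left_eq_add] at this
  rw [hde, hede, smul_zero]

namespace IsJordanLeftDerivation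

variable {f g h : A →ₗ[C] A}

theorem map_eq_add_mul (h2 : IsSMulRegular A 2) (hJ : IsJordanLeftDerivation f g h) (b : A) :
    f b = g b + b * h 1 :=
  h2 <| by simpa [two_smul] using hJ 1 b

theorem map_eq_mul_add (h2 : IsSMulRegular A 2) (hJ : IsJordanLeftDerivation f g h) (a : A) :
    f a = a * g 1 + h a :=
  h2 <| by simpa [two_smul] using hJ a 1

theorem map_mul_self (h2 : IsSMulRegular A 2) (hJ : IsJordanLeftDerivation f g h) (a : A) :
    f (a * a) = 2 • (a * f a) - a * a * (g 1 + h 1) := by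
  refine h2 (?_ : 2 • _ = 2 • _)
  have hg : g a = f a - a * h 1 := eq_sub_of_add_eq (hJ.map_eq_add_mul h2 a).symm
  have hh : h a = f a - a * g 1 := eq_sub_of_add_eq' (hJ.map_eq_mul_add h2 a).symm
  rw [← map_nsmul, two_smul, hJ a a, hg, hh]
  simp only [two_smul, mul_sub, mul_add, mul_assoc]
  abel

theorem eq_mulRight (h2 : IsSMulRegular A 2)
    (hspan : Submodule.span C {e : A | IsIdempotentElem e} = ⊤)
    (hJ : IsJordanLeftDerivation f g h) : f = LinearMap.mulRight C (g 1 + h 1) := by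
  rw [← sub_eq_zero]
  refine LinearMap.ext_on hspan fun e he => ?_
  refine map_eq_zero_of_isIdempotentElem_of_map_mul_self
    (d := (f - LinearMap.mulRight C (g 1 + h 1)).toAddMonoidHom) (fun a => ?_) he
  simp only [LinearMap.toAddMonoidHom_coe, LinearMap.sub_apply, LinearMap.mulRight_apply,
    hJ.map_mul_self h2, mul_sub, smul_sub, mul_assoc, two_smul]
  abel

end IsJordanLeftDerivation

theorem isJordanLeftDerivation_add_iff {g h : A →ₗ[C] A} {α β : A} (hg : ∀ a, g a = a * α)
    (hh : ∀ a, h a = a * β) :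
    IsJordanLeftDerivation (g + h) g h ↔ ∀ a b : A, (a * b - b * a) * (β - α) = 0 := by
  refine forall₂_congr fun a b => ?_
  rw [← sub_eq_zero, LinearMap.add_apply, hg, hh, hg, hh]
  constructor <;> intro H <;> rw [← H] <;> noncomm_ring

theorem isJordanLeftDerivation_iff (h2 : IsSMulRegular A 2)
    (hspan : Submodule.span C {e : A | IsIdempotentElem e} = ⊤) {f g h : A →ₗ[C] A} :
    IsJordanLeftDerivation f g h ↔
      ∃ α β : A, (∀ a b : A, (a * b - b * a) * (β - α) = 0) ∧ (∀ a, g a = a * α) ∧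
        (∀ a, h a = a * β) ∧ f = g + h := by
  constructor
  · intro hJ
    have hf := hJ.eq_mulRight h2 hspan
    have hg (a : A) : g a = a * g 1 := by
      have := hJ.map_eq_add_mul h2 a
      rw [hf, LinearMap.mulRight_apply, mul_add] at this
      exact (add_right_cancel this).symm
    have hh (a : A) : h a = a * h 1 := by
      have := hJ.map_eq_mul_add h2 a
      rw [hf, LinearMap.mulRight_apply, mul_add] at this
      exact (add_left_cancel this).symm
    have hfgh : f = g + h := LinearMap.ext fun a => by
      rw [hf, LinearMap.add_apply, LinearMap.mulRight_apply, hg a, hh a, mul_add]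
    exact ⟨g 1, h 1, (isJordanLeftDerivation_add_iff hg hh).1 (hfgh ▸ hJ), hg, hh, hfgh⟩
  · rintro ⟨α, β, hc, hg, hh, rfl⟩
    exact (isJordanLeftDerivation_add_iff hg hh).2 hc

end JordanLeftDerivation

namespace Matrix.BlockTriangular

variable {ι R : Type*} [LinearOrder ι] [Fintype ι]

theorem mul_apply_of_isBot [NonUnitalNonAssocSemiring R] {M N : Matrix ι ι R}
    (hN : N.BlockTriangular id) {c : ι} (hc : IsBot c) (r : ι) :
    (M * N) r c = M r c * N c c := by
  rw [Matrix.mul_apply, Finset.sum_eq_single c (fun m _ hm => ?_) (by simp)]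
  rw [hN ((hc m).lt_of_ne' hm), mul_zero]

theorem commutator_apply_of_isBot [CommRing R] {A B : Matrix ι ι R} (hA : A.BlockTriangular id)
    (hB : B.BlockTriangular id) {c : ι} (hc : IsBot c) (r : ι) :
    (A * B - B * A) r c = 0 := by
  rw [Matrix.sub_apply, hB.mul_apply_of_isBot hc, hA.mul_apply_of_isBot hc]
  rcases eq_or_ne r c with rfl | hr
  · ring
  · have hcr := (hc r).lt_of_ne' hr
    rw [hA hcr, hB hcr, zero_mul, zero_mul, sub_zero]

end Matrix.BlockTriangular

namespace upperTriangularAlgebra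

variable {C : Type*} [CommRing C] {n : ℕ}

theorem isSMulRegular {r : ℕ} (hr : IsSMulRegular C r) :
    IsSMulRegular (upperTriangularAlgebra n C) r := fun _ _ hxy =>
  Subtype.ext <| Matrix.ext fun i j =>
    hr (congrArg (fun M : upperTriangularAlgebra n C => (M : Matrix (Fin n) (Fin n) C) i j) hxy)

theorem single_mem {i j : Fin n} (hij : i ≤ j) (c : C) :
    Matrix.single i j c ∈ upperTriangularAlgebra n C := by
  intro r s hrs
  refine Matrix.single_apply_of_ne _ _ _ _ _ ?_
  rintro ⟨rfl, rfl⟩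
  exact hrs.not_ge hij

theorem single_apply_mem (A : upperTriangularAlgebra n C) (i j : Fin n) :
    Matrix.single i j (A.val i j) ∈ upperTriangularAlgebra n C := by
  rcases le_or_gt i j with hij | hji
  · exact single_mem hij _
  · rw [A.2 hji, Matrix.single_zero]
    exact zero_mem _

theorem single_mem_span_isIdempotentElem {i j : Fin n} (hij : i ≤ j) (c : C) :
    (⟨Matrix.single i j c, single_mem hij c⟩ : upperTriangularAlgebra n C) ∈
      Submodule.span C {e | IsIdempotentElem e} := by
  set S := Submodule.span C {e : upperTriangularAlgebra n C | IsIdempotentElem e}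
  have hdiag : (⟨Matrix.single i i 1, single_mem le_rfl 1⟩ : upperTriangularAlgebra n C) ∈ S :=
    Submodule.subset_span <| Subtype.ext <| by simp
  have hunit : (⟨Matrix.single i j 1, single_mem hij 1⟩ : upperTriangularAlgebra n C) ∈ S := by
    rcases hij.lt_or_eq with hlt | rfl
    · have hidem : IsIdempotentElem (⟨Matrix.single i i 1 + Matrix.single i j 1,
          add_mem (single_mem le_rfl 1) (single_mem hij 1)⟩ : upperTriangularAlgebra n C) :=
        Subtype.ext <| by
          simp [add_mul, mul_add, Matrix.single_mul_single_of_ne, hlt.ne']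
      convert S.sub_mem (Submodule.subset_span hidem) hdiag using 1
      exact Subtype.ext (by simp)
    · exact hdiag
  convert S.smul_mem c hunit using 1
  exact Subtype.ext (by simp [Matrix.smul_single])

theorem span_isIdempotentElem :
    Submodule.span C {e : upperTriangularAlgebra n C | IsIdempotentElem e} = ⊤ := by
  refine Submodule.eq_top_iff'.2 fun A => ?_
  have hA : A = ∑ i, ∑ j, ⟨Matrix.single i j (A.val i j), single_apply_mem A i j⟩ :=
    Subtype.ext (by simpa using Matrix.matrix_eq_sum_single (A : Matrix (Fin n) (Fin n) C))
  rw [hA]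
  refine Submodule.sum_mem _ fun i _ => Submodule.sum_mem _ fun j _ => ?_
  rcases le_or_gt i j with hij | hji
  · exact single_mem_span_isIdempotentElem hij _
  · simp only [A.2 hji, Matrix.single_zero]
    exact zero_mem _

theorem forall_commutator_mul_eq_zero_iff (δ : upperTriangularAlgebra n C) :
    (∀ a b : upperTriangularAlgebra n C, (a * b - b * a) * δ = 0) ↔
      ∀ i j : Fin n, (i : ℕ) ≠ 0 → (δ : Matrix (Fin n) (Fin n) C) i j = 0 := by
  constructor
  · intro H j k hj
    let i₀ : Fin n := ⟨0, by omega⟩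
    have hi₀j : i₀ < j := Nat.pos_of_ne_zero hj
    have := congrArg (fun x : upperTriangularAlgebra n C => (x : Matrix (Fin n) (Fin n) C) i₀ k)
      (H ⟨Matrix.single i₀ i₀ 1, single_mem le_rfl 1⟩ ⟨Matrix.single i₀ j 1, single_mem hi₀j.le 1⟩)
    simpa [Matrix.single_mul_single_of_ne, hi₀j.ne'] using this
  · intro H a b
    refine Subtype.ext <| Matrix.ext fun r k => ?_
    simp only [MulMemClass.coe_mul, AddSubgroupClass.coe_sub, Matrix.mul_apply]
    refine Finset.sum_eq_zero fun m _ => ?_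
    by_cases hm : (m : ℕ) = 0
    · have hbot : IsBot m := fun _ => Fin.le_def.2 (hm ▸ Nat.zero_le _)
      rw [a.2.commutator_apply_of_isBot b.2 hbot r, zero_mul]
    · rw [H m k hm, mul_zero]

end upperTriangularAlgebra

theorem jordan_left_gh_derivation_upperTriangular_iff_general
    {C : Type*} [CommRing C] (htf : ∀ c : C, 2 • c = 0 → c = 0)
    (n : ℕ)
    (f g h : upperTriangularAlgebra n C →ₗ[C] upperTriangularAlgebra n C) :
    (∀ A B : upperTriangularAlgebra n C,
        f (A * B + B * A) = 2 • (A * g B + B * h A)) ↔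
      ∃ α β : upperTriangularAlgebra n C,
        (∀ i j : Fin n, (i : ℕ) ≠ 0 → ((β : Matrix (Fin n) (Fin n) C) -
          (α : Matrix (Fin n) (Fin n) C)) i j = 0) ∧
        (∀ A : upperTriangularAlgebra n C, g A = A * α) ∧
        (∀ A : upperTriangularAlgebra n C, h A = A * β) ∧
        f = g + h := by
  have h2 := upperTriangularAlgebra.isSMulRegular (n := n) (.of_right_eq_zero_of_smul htf)
  refine (isJordanLeftDerivation_iff h2 upperTriangularAlgebra.span_isIdempotentElem).trans ?_
  exact exists₂_congr fun α β =>
    and_congr_left' (upperTriangularAlgebra.forall_commutator_mul_eq_zero_iff (β - α))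

/-- characterization of Jordan left `{g,h}`-derivations on `T_n(C)`. -/
theorem jordan_left_gh_derivation_upperTriangular_iff
    {C : Type*} [CommRing C] (htf : ∀ c : C, 2 • c = 0 → c = 0)
    (n : ℕ) (hn : 2 ≤ n)
    (f g h : upperTriangularAlgebra n C →ₗ[C] upperTriangularAlgebra n C) :
    (∀ A B : upperTriangularAlgebra n C,
        f (A * B + B * A) = 2 • (A * g B + B * h A)) ↔
      ∃ α β : upperTriangularAlgebra n C,
        (∀ i j : Fin n, (i : ℕ) ≠ 0 → ((β : Matrix (Fin n) (Fin n) C) -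
          (α : Matrix (Fin n) (Fin n) C)) i j = 0) ∧
        (∀ A : upperTriangularAlgebra n C, g A = A * α) ∧
        (∀ A : upperTriangularAlgebra n C, h A = A * β) ∧
        f = g + h :=
  jordan_left_gh_derivation_upperTriangular_iff_general htf n f g h
end

section
/- Let C be a 2-torsion free commutative ring with unity, let n ≥ 2, and let M_n(C) denote the algebra of n×n matrices over C. If f, g, h : M_n(C) → M_n(C) are linear maps such that f is a Jordan left {g,h}-derivation, then g = h. -/
/-!
Swapping `a` and `b` and cancelling the `2` gives `a (g b - h b) = b (g a - h a)`; putting `b = 1`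
shows `g a - h a = a d` with `d = g 1 - h 1`, and then `a b d = b a d` for all `a, b`.
In `M_n(C)` with `n ≥ 2` the matrix units give `E_ij = E_ii E_ij - E_ij E_ii` for `i ≠ j`,
so `E_ij d = 0`, which kills the `j`-th row of `d`; hence `d = 0` and `g = h`.
-/

def IsJordanLeftGHDerivation {A : Type*} [Ring A] (f g h : A → A) : Prop :=
  ∀ a b : A, f (a * b + b * a) = 2 • (a * g b + b * h a)

namespace IsJordanLeftGHDerivation

variable {A : Type*} [Ring A] {f g h : A → A}

theorem mul_sub_comm (h2 : ∀ x : A, 2 • x = 0 → x = 0) (hf : IsJordanLeftGHDerivation f g h)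
    (a b : A) : a * (g b - h b) = b * (g a - h a) := by
  have hsymm : a * g b + b * h a = b * g a + a * h b := by
    refine sub_eq_zero.mp (h2 _ ?_)
    rw [smul_sub, ← hf a b, ← hf b a, add_comm, sub_self]
  calc a * (g b - h b) = (a * g b + b * h a) - (b * h a + a * h b) := by noncomm_ring
    _ = (b * g a + a * h b) - (b * h a + a * h b) := by rw [hsymm]
    _ = b * (g a - h a) := by noncomm_ring

theorem sub_eq_mul_sub_one (h2 : ∀ x : A, 2 • x = 0 → x = 0)
    (hf : IsJordanLeftGHDerivation f g h) (a : A) : g a - h a = a * (g 1 - h 1) := by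
  simpa using (hf.mul_sub_comm h2 a 1).symm

theorem eq_of_forall_mul_mul_comm_imp_eq_zero (h2 : ∀ x : A, 2 • x = 0 → x = 0)
    (hf : IsJordanLeftGHDerivation f g h)
    (hA : ∀ d : A, (∀ a b : A, a * b * d = b * a * d) → d = 0) : g = h := by
  have hd : g 1 - h 1 = 0 := hA _ fun a b => by
    have hab := hf.mul_sub_comm h2 a b
    rwa [hf.sub_eq_mul_sub_one h2 b, hf.sub_eq_mul_sub_one h2 a, ← mul_assoc, ← mul_assoc] at hab
  funext a
  rw [← sub_eq_zero, hf.sub_eq_mul_sub_one h2, hd, mul_zero]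

end IsJordanLeftGHDerivation

namespace Matrix

variable {m n R : Type*}

theorem eq_zero_of_two_nsmul_eq_zero [AddCommMonoid R] (h2 : ∀ c : R, 2 • c = 0 → c = 0)
    {M : Matrix m n R} (hM : 2 • M = 0) : M = 0 :=
  ext fun i j => h2 _ (by simpa using congrFun₂ hM i j)

theorem eq_zero_of_forall_mul_mul_comm [Fintype n] [DecidableEq n] [Nontrivial n] [Semiring R]
    {D : Matrix n n R} (hD : ∀ A B : Matrix n n R, A * B * D = B * A * D) : D = 0 := by
  ext j k
  obtain ⟨i, hij⟩ := exists_ne j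
  have hunit := congrFun₂ (hD (single i i 1) (single i j 1)) i k
  rw [single_mul_single_same, single_mul_single_of_ne (h := hij.symm), zero_mul] at hunit
  simpa using hunit

end Matrix

/-- if `f` is a Jordan left `{g,h}`-derivation on the full matrix algebra
`M_n(C)` (with `C` 2-torsion free and `n ≥ 2`), then `g = h`. -/
theorem jordan_left_gh_derivation_matrix_g_eq_h
    {C : Type*} [CommRing C] (htf : ∀ c : C, 2 • c = 0 → c = 0)
    (n : ℕ) (hn : 2 ≤ n)
    (f g h : Matrix (Fin n) (Fin n) C →ₗ[C] Matrix (Fin n) (Fin n) C)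
    (hf : ∀ A B : Matrix (Fin n) (Fin n) C,
        f (A * B + B * A) = 2 • (A * g B + B * h A)) :
    g = h := by
  have : Nontrivial (Fin n) := Fin.nontrivial_iff_two_le.mpr hn
  have hfgh : IsJordanLeftGHDerivation f g h := hf
  exact LinearMap.coe_injective <| hfgh.eq_of_forall_mul_mul_comm_imp_eq_zero
    (fun _ => Matrix.eq_zero_of_two_nsmul_eq_zero htf) fun _ => Matrix.eq_zero_of_forall_mul_mul_comm
end

section
/- Let C be a 2-torsion free commutative ring with unity, let n ≥ 2, and let M_n(C) denote the algebra of n×n matrices over C. If f, g : M_n(C) → M_n(C) are linear maps such that f is a left {g,g}-derivation, then f = 0 and g = 0. -/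
/-!
The right-hand side `a g(b) + b g(a)` is symmetric in `a, b`, so `f(ab) = f(ba)`; in particular
`f` kills every off-diagonal matrix unit `E_ij = E_ii E_ij`, since `E_ij E_ii = 0`. For each pair of
matrix units with `f(E_ij E_kl) = 0` the identity `E_ij g(E_kl) + E_kl g(E_ij) = 0`, read in row `i`,
exhibits a row of some `g(E_kl)` as zero, and enough such pairs exist once `n ≥ 2` to get
`g(E_kl) = 0` for all `k, l`. Hence `g = 0`, and then `f(A) = f(A · 1) = A g(1) + g(A) = 0`.
-/

open Matrix

def IsLeftGGDerivation {R : Type*} [Mul R] [Add R] (f g : R → R) : Prop :=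
  ∀ a b : R, f (a * b) = a * g b + b * g a

namespace IsLeftGGDerivation

section Semiring

variable {R : Type*} [NonUnitalNonAssocSemiring R] {f g : R → R}

theorem map_zero (hf : IsLeftGGDerivation f g) : f 0 = 0 := by
  simpa using hf 0 0

theorem map_mul_comm (hf : IsLeftGGDerivation f g) (a b : R) : f (a * b) = f (b * a) := by
  rw [hf, hf, add_comm]

end Semiring

section Matrix

variable {ι R : Type*} [Fintype ι] [DecidableEq ι] [Semiring R]
  {f g : Matrix ι ι R → Matrix ι ι R}

theorem map_single_of_ne (hf : IsLeftGGDerivation f g) {i j : ι} (hij : i ≠ j) :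
    f (single i j 1) = 0 := by
  have h := hf.map_mul_comm (single i i 1) (single i j 1)
  rwa [single_mul_single_same, one_mul, single_mul_single_of_ne _ _ _ _ hij.symm,
    hf.map_zero] at h

/-- Row `i` of `E_ij g(E_kl) + E_kl g(E_ij)` is row `j` of `g(E_kl)`, as `i ≠ k`. -/
theorem apply_single_apply_eq_zero (hf : IsLeftGGDerivation f g) {i j k l : ι} (hik : i ≠ k)
    (h : f (single i j 1 * single k l 1) = 0) (q : ι) : g (single k l 1) j q = 0 := by
  simpa [hik] using congrFun₂ ((hf _ _).symm.trans h) i q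

theorem apply_single_apply_eq_zero_of_ne [Nontrivial ι] (hf : IsLeftGGDerivation f g)
    {j k : ι} (hjk : j ≠ k) (l q : ι) : g (single k l 1) j q = 0 := by
  obtain ⟨i, hik⟩ := exists_ne k
  exact hf.apply_single_apply_eq_zero hik
    (by rw [single_mul_single_of_ne _ _ _ _ hjk, hf.map_zero]) q

theorem map_single_eq_zero [Nontrivial ι] (hf : IsLeftGGDerivation f g) (k l : ι) :
    g (single k l 1) = 0 := by
  ext j q
  rcases ne_or_eq j k with hjk | rfl
  · exact hf.apply_single_apply_eq_zero_of_ne hjk l q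
  rcases eq_or_ne j l with rfl | hjl
  · obtain ⟨i, hij⟩ := exists_ne j
    exact hf.apply_single_apply_eq_zero hij
      (by rw [single_mul_single_same, one_mul, hf.map_single_of_ne hij]) q
  · have hrow := congrFun₂ ((hf (single j j 1) (single j l 1)).symm.trans
      (by rw [single_mul_single_same, one_mul, hf.map_single_of_ne hjl])) j q
    simpa [hf.apply_single_apply_eq_zero_of_ne hjl.symm] using hrow

end Matrix

end IsLeftGGDerivation

theorem left_gg_derivation_matrix_eq_zero_general
    {C : Type*} [CommRing C]
    (n : ℕ) (hn : 2 ≤ n)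
    (f g : Matrix (Fin n) (Fin n) C →ₗ[C] Matrix (Fin n) (Fin n) C)
    (hf : ∀ A B : Matrix (Fin n) (Fin n) C,
        f (A * B) = A * g B + B * g A) :
    f = 0 ∧ g = 0 := by
  have : Nontrivial (Fin n) := Fin.nontrivial_iff_two_le.mpr hn
  have hg : g = 0 := Matrix.ext_linearMap _ fun i j =>
    LinearMap.ext_ring <| by simpa using IsLeftGGDerivation.map_single_eq_zero hf i j
  refine ⟨LinearMap.ext fun A => ?_, hg⟩
  simpa [hg] using hf A 1

/-- if `f` is a left `{g,g}`-derivation on `M_n(C)` (with `C` 2-torsion free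
and `n ≥ 2`), then `f = 0` and `g = 0`. -/
theorem left_gg_derivation_matrix_eq_zero
    {C : Type*} [CommRing C] (htf : ∀ c : C, 2 • c = 0 → c = 0)
    (n : ℕ) (hn : 2 ≤ n)
    (f g : Matrix (Fin n) (Fin n) C →ₗ[C] Matrix (Fin n) (Fin n) C)
    (hf : ∀ A B : Matrix (Fin n) (Fin n) C,
        f (A * B) = A * g B + B * g A) :
    f = 0 ∧ g = 0 :=
  left_gg_derivation_matrix_eq_zero_general n hn f g hf
end

section
/- Let A be an algebra over a commutative ring C and let f, g, h : A → A be C-linear maps such that f is a left {g,h}-derivation. For a linear map F : A → A, let F̃ : A[x] → A[x] be the linear map applying F coefficientwise, i.e., the coefficient of x^n in F̃(P) equals F applied to the coefficient of x^n in P, for every polynomial P ∈ A[x] and every n. Then f̃ is a left {g̃, h̃}-derivation on the polynomial algebra A[x]. -/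
open Polynomial Finset

theorem Polynomial.coeffwise_map_mul {R : Type*} [Semiring R] (f u v : R →+ R)
    (hf : ∀ a b : R, f (a * b) = a * u b + b * v a) (F U V : R[X] → R[X])
    (hF : ∀ P n, (F P).coeff n = f (P.coeff n)) (hU : ∀ P n, (U P).coeff n = u (P.coeff n))
    (hV : ∀ P n, (V P).coeff n = v (P.coeff n)) (P Q : R[X]) :
    F (P * Q) = P * U Q + Q * V P := by
  ext n
  have hQV : (Q * V P).coeff n = ∑ x ∈ antidiagonal n, Q.coeff x.2 * v (P.coeff x.1) := by
    rw [coeff_mul, ← Finset.Nat.sum_antidiagonal_swap]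
    simp only [Prod.fst_swap, Prod.snd_swap, hV]
  rw [hF, coeff_mul, map_sum, coeff_add, hQV, coeff_mul, ← sum_add_distrib]
  exact sum_congr rfl fun x _ => by rw [hf, hU]

/-- if `f` is a left `{g,h}`-derivation on `A`, then the coefficientwise
extensions `f̃, g̃, h̃` to the polynomial algebra `A[x]` make `f̃` a left
`{g̃, h̃}`-derivation. -/
theorem left_gh_derivation_polynomial
    {C A : Type*} [CommRing C] [Ring A] [Algebra C A]
    (f g h : A →ₗ[C] A)
    (hf : ∀ a b : A, f (a * b) = a * g b + b * h a ∧ f (a * b) = a * h b + b * g a)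
    (ft gt ht : Polynomial A →ₗ[C] Polynomial A)
    (hft : ∀ (P : Polynomial A) (n : ℕ), (ft P).coeff n = f (P.coeff n))
    (hgt : ∀ (P : Polynomial A) (n : ℕ), (gt P).coeff n = g (P.coeff n))
    (hht : ∀ (P : Polynomial A) (n : ℕ), (ht P).coeff n = h (P.coeff n)) :
    ∀ P Q : Polynomial A, ft (P * Q) = P * gt Q + Q * ht P ∧
      ft (P * Q) = P * ht Q + Q * gt P := fun P Q =>
  ⟨coeffwise_map_mul f.toAddMonoidHom g.toAddMonoidHom h.toAddMonoidHom (fun a b => (hf a b).1)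
      ft gt ht hft hgt hht P Q,
    coeffwise_map_mul f.toAddMonoidHom h.toAddMonoidHom g.toAddMonoidHom (fun a b => (hf a b).2)
      ft ht gt hft hht hgt P Q⟩
end

section
/- Let A be an algebra over a commutative ring C and let f, g, h : A → A be C-linear maps such that f is a Jordan left {g,h}-derivation. For a linear map F : A → A, let F̃ : A[x] → A[x] be the linear map applying F coefficientwise, i.e., the coefficient of x^n in F̃(P) equals F applied to the coefficient of x^n in P, for every polynomial P ∈ A[x] and every n. Then f̃ is a Jordan left {g̃, h̃}-derivation on the polynomial algebra A[x]. -/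
open Polynomial Finset

/-- Summing the second product over the swapped antidiagonal makes each term of
`(P * Q + Q * P).coeff n` a Jordan product of coefficients. -/
theorem Polynomial.coeff_mul_add_mul_swap {A : Type*} [Semiring A] (P Q R S : A[X]) (n : ℕ) :
    (P * Q + R * S).coeff n =
      ∑ p ∈ antidiagonal n, (P.coeff p.1 * Q.coeff p.2 + R.coeff p.2 * S.coeff p.1) := by
  rw [coeff_add, coeff_mul, coeff_mul, sum_add_distrib,
    ← Nat.sum_antidiagonal_swap (f := fun p => R.coeff p.2 * S.coeff p.1)]
  rfl

/-- if `f` is a Jordan left `{g,h}`-derivation on `A`, then the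
coefficientwise extensions `f̃, g̃, h̃` to the polynomial algebra `A[x]` make `f̃` a
Jordan left `{g̃, h̃}`-derivation. -/
theorem jordan_left_gh_derivation_polynomial
    {C A : Type*} [CommRing C] [Ring A] [Algebra C A]
    (f g h : A →ₗ[C] A)
    (hf : ∀ a b : A, f (a * b + b * a) = 2 • (a * g b + b * h a))
    (ft gt ht : Polynomial A →ₗ[C] Polynomial A)
    (hft : ∀ (P : Polynomial A) (n : ℕ), (ft P).coeff n = f (P.coeff n))
    (hgt : ∀ (P : Polynomial A) (n : ℕ), (gt P).coeff n = g (P.coeff n))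
    (hht : ∀ (P : Polynomial A) (n : ℕ), (ht P).coeff n = h (P.coeff n)) :
    ∀ P Q : Polynomial A, ft (P * Q + Q * P) = 2 • (P * gt Q + Q * ht P) := by
  intro P Q
  ext n
  rw [hft, coeff_smul, coeff_mul_add_mul_swap, coeff_mul_add_mul_swap, map_sum, smul_sum]
  refine sum_congr rfl fun p _ => ?_
  rw [hf, hgt, hht]
end

section
/- Let ℍ_ℝ be the algebra of real quaternions. If f, g : ℍ_ℝ → ℍ_ℝ are ℝ-linear maps such that f is a left {g,g}-derivation, then f = 0 and g = 0. -/
open scoped Quaternion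

/-!
Since `g` enters the identity symmetrically, `f (p * q) = f (q * p)`; hence `f` kills every
product of two anticommuting elements, in particular `i = j * k`, `j = k * i` and `k = i * j`.
Putting `q = 1` gives `f p = p * g 1 + g p`, and evaluating the identity at `p = q = i` then
yields `4 • g 1 = 0`. So `g 1 = 0`, `f 1 = 2 • g 1 = 0`, `f` vanishes on the basis `1, i, j, k`,
and `g = f = 0`.
-/

section LeftDerivation

variable {A : Type*} {g : A → A}

theorem map_mul_comm_of_left_derivation [Mul A] [AddCommMagma A] {f : A → A}
    (hf : ∀ p q, f (p * q) = p * g q + q * g p) (p q : A) : f (p * q) = f (q * p) := by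
  rw [hf, hf, add_comm]

theorem map_eq_mul_map_one_add_of_left_derivation [MulOneClass A] [Add A] {f : A → A}
    (hf : ∀ p q, f (p * q) = p * g q + q * g p) (p : A) : f p = p * g 1 + g p := by
  simpa using hf p 1

theorem map_one_of_left_derivation [MulOneClass A] [Add A] {f : A → A}
    (hf : ∀ p q, f (p * q) = p * g q + q * g p) : f 1 = g 1 + g 1 := by
  simpa using hf 1 1

theorem map_one_eq_zero_of_left_derivation [Ring A] [IsAddTorsionFree A] {F : Type*}
    [FunLike F A A] [AddMonoidHomClass F A A] {f : F}
    (hf : ∀ p q, f (p * q) = p * g q + q * g p) {u : A} (hu : u * u = -1) (hfu : f u = 0) :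
    g 1 = 0 := by
  have hgu : g u = -(u * g 1) := by
    have h := map_eq_mul_map_one_add_of_left_derivation hf u
    rw [hfu] at h
    exact eq_neg_of_add_eq_zero_right h.symm
  have h := hf u u
  rw [hu, map_neg, map_one_of_left_derivation hf, hgu, mul_neg, ← mul_assoc, hu, neg_one_mul,
    neg_neg, neg_eq_self] at h
  exact self_eq_neg.mp (eq_neg_of_add_eq_zero_left h)

end LeftDerivation

theorem map_mul_eq_zero_of_mul_comm_eq_neg {A M F : Type*} [Mul A] [AddGroup A] [AddGroup M]
    [IsAddTorsionFree M] [FunLike F A M] [AddMonoidHomClass F A M] {f : F} {p q : A}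
    (hsym : f (p * q) = f (q * p)) (hpq : q * p = -(p * q)) : f (p * q) = 0 := by
  rwa [hpq, map_neg, self_eq_neg] at hsym

namespace QuaternionAlgebra

namespace Basis

variable {R A : Type*} [CommRing R] [Ring A] [Algebra R A] (q : Basis A (-1 : R) 0 (-1))

theorem i_mul_i_eq_neg_one : q.i * q.i = -1 := by simp

theorem j_mul_i_eq_neg : q.j * q.i = -(q.i * q.j) := by simp

theorem k_mul_j_eq_neg : q.k * q.j = -(q.j * q.k) := by simp

theorem i_mul_k_eq_neg : q.i * q.k = -(q.k * q.i) := by simp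

theorem j_mul_k_eq_i : q.j * q.k = q.i := by simp

theorem k_mul_i_eq_j : q.k * q.i = q.j := by simp

theorem map_ijk_eq_zero_of_map_mul_comm {M F : Type*} [AddGroup M] [IsAddTorsionFree M]
    [FunLike F A M] [AddMonoidHomClass F A M] {f : F} (hf : ∀ p q, f (p * q) = f (q * p)) :
    f q.i = 0 ∧ f q.j = 0 ∧ f q.k = 0 := by
  refine ⟨?_, ?_, ?_⟩
  · rw [← q.j_mul_k_eq_i]
    exact map_mul_eq_zero_of_mul_comm_eq_neg (hf _ _) q.k_mul_j_eq_neg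
  · rw [← q.k_mul_i_eq_j]
    exact map_mul_eq_zero_of_mul_comm_eq_neg (hf _ _) q.i_mul_k_eq_neg
  · rw [← q.i_mul_j]
    exact map_mul_eq_zero_of_mul_comm_eq_neg (hf _ _) q.j_mul_i_eq_neg

end Basis

variable {R : Type*} {c₁ c₂ c₃ : R} [CommRing R]

theorem coe_basisOneIJK :
    ⇑(basisOneIJK c₁ c₂ c₃) = ![1, (Basis.self R).i, (Basis.self R).j, (Basis.self R).k] := by
  ext n : 1
  fin_cases n <;> ext <;> simp [basisOneIJK]

theorem linearMap_ext {M : Type*} [AddCommMonoid M] [Module R M]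
    {f₁ f₂ : ℍ[R,c₁,c₂,c₃] →ₗ[R] M} (h1 : f₁ 1 = f₂ 1)
    (hi : f₁ (Basis.self R).i = f₂ (Basis.self R).i)
    (hj : f₁ (Basis.self R).j = f₂ (Basis.self R).j)
    (hk : f₁ (Basis.self R).k = f₂ (Basis.self R).k) : f₁ = f₂ := by
  refine (basisOneIJK c₁ c₂ c₃).ext fun n => ?_
  fin_cases n <;> simpa [coe_basisOneIJK]

end QuaternionAlgebra

/-- if `f` is a left `{g,g}`-derivation on the real quaternions, then
`f = 0` and `g = 0`. -/
theorem left_gg_derivation_quaternion_eq_zero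
    (f g : ℍ[ℝ] →ₗ[ℝ] ℍ[ℝ])
    (hf : ∀ p q : ℍ[ℝ], f (p * q) = p * g q + q * g p) :
    f = 0 ∧ g = 0 := by
  have : IsAddTorsionFree ℍ[ℝ] := .of_module_rat ℍ[ℝ]
  let q : QuaternionAlgebra.Basis ℍ[ℝ] (-1 : ℝ) 0 (-1) := .self ℝ
  obtain ⟨hi, hj, hk⟩ := q.map_ijk_eq_zero_of_map_mul_comm (map_mul_comm_of_left_derivation hf)
  have hg1 : g 1 = 0 := map_one_eq_zero_of_left_derivation hf q.i_mul_i_eq_neg_one hi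
  have hf1 : f 1 = 0 := by rw [map_one_of_left_derivation hf, hg1, add_zero]
  have hf0 : f = 0 := QuaternionAlgebra.linearMap_ext hf1 hi hj hk
  refine ⟨hf0, LinearMap.ext fun p => ?_⟩
  have hp := map_eq_mul_map_one_add_of_left_derivation hf p
  rwa [hf0, hg1, mul_zero, zero_add, eq_comm] at hp
end

section
/- Let D be a finite-dimensional division algebra over the real numbers ℝ that is not commutative. If f, g : D → D are ℝ-linear maps such that f is a left {g,g}-derivation, then f = 0 and g = 0. -/
/-!
Put `c = g 1`. Taking `b = 1` gives `g a = f a - a c`, hence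
`f (a b) = a f b + b f a - (a b + b a) c`. Expanding `f (a b b)` in the two ways allowed by
associativity gives `[a, b] f b = 2 [a, b] b c`, so `f b = 2 b c` for every non-central `b`, and by
additivity also for central `b`, since `b = (b + a) - a` with `a` and `b + a` non-central.
Substituting `f x = 2 x c` back into the expansion of `f (a b)` leaves `[a, b] c = 0`, so `c = 0`,
and then `f = g = 0`.
-/

section LeftDerivation

variable {D : Type*} [Ring D] {f g : D → D}

theorem apply_eq_sub_mul_apply_one (hf : ∀ a b, f (a * b) = a * g b + b * g a) (a : D) :
    g a = f a - a * g 1 := by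
  have h := hf a 1
  rw [mul_one, one_mul] at h
  rw [h, add_sub_cancel_left]

theorem apply_mul_eq_of_left_derivation (hf : ∀ a b, f (a * b) = a * g b + b * g a) (a b : D) :
    f (a * b) = a * f b + b * f a - (a * b + b * a) * g 1 := by
  rw [hf, apply_eq_sub_mul_apply_one hf a, apply_eq_sub_mul_apply_one hf b]
  noncomm_ring

theorem commutator_mul_apply_eq (hf : ∀ a b, f (a * b) = a * g b + b * g a) (a b : D) :
    (a * b - b * a) * f b = (a * b - b * a) * (2 * (b * g 1)) := by
  have h₁ := apply_mul_eq_of_left_derivation hf (a * b) b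
  have h₂ := apply_mul_eq_of_left_derivation hf a (b * b)
  rw [apply_mul_eq_of_left_derivation hf a b] at h₁
  rw [mul_assoc, apply_mul_eq_of_left_derivation hf b b] at h₂
  linear_combination (norm := noncomm_ring) h₁ - h₂

theorem apply_eq_two_mul_of_mul_ne [NoZeroDivisors D] (hf : ∀ a b, f (a * b) = a * g b + b * g a)
    {a b : D} (hab : a * b ≠ b * a) : f b = 2 * (b * g 1) :=
  mul_left_cancel₀ (sub_ne_zero.mpr hab) (commutator_mul_apply_eq hf a b)

theorem apply_eq_two_mul_of_exists_mul_ne [NoZeroDivisors D]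
    (hf : ∀ a b, f (a * b) = a * g b + b * g a) (hf_add : ∀ x y, f (x + y) = f x + f y)
    {a₀ b₀ : D} (hab : a₀ * b₀ ≠ b₀ * a₀) (x : D) : f x = 2 * (x * g 1) := by
  by_cases hx : b₀ * x = x * b₀
  · have hxa : b₀ * (x + a₀) ≠ (x + a₀) * b₀ := by
      rw [mul_add, add_mul, hx]
      exact fun h ↦ hab (add_left_cancel h).symm
    have h := hf_add x a₀
    rw [apply_eq_two_mul_of_mul_ne hf hxa, apply_eq_two_mul_of_mul_ne hf hab.symm] at h
    linear_combination (norm := noncomm_ring) -h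
  · exact apply_eq_two_mul_of_mul_ne hf hx

theorem left_derivation_eq_zero_of_exists_mul_ne [NoZeroDivisors D]
    (hf : ∀ a b, f (a * b) = a * g b + b * g a) (hf_add : ∀ x y, f (x + y) = f x + f y)
    {a₀ b₀ : D} (hab : a₀ * b₀ ≠ b₀ * a₀) : f = 0 ∧ g = 0 := by
  have hf_eq := apply_eq_two_mul_of_exists_mul_ne hf hf_add hab
  have hg1 : g 1 = 0 := by
    have h := apply_mul_eq_of_left_derivation hf a₀ b₀
    rw [hf_eq, hf_eq, hf_eq] at h
    have h' : (a₀ * b₀ - b₀ * a₀) * g 1 = 0 := by linear_combination (norm := noncomm_ring) h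
    exact (mul_eq_zero.mp h').resolve_left (sub_ne_zero.mpr hab)
  have hf0 : f = 0 := funext fun x ↦ by simp [hf_eq, hg1]
  refine ⟨hf0, funext fun x ↦ ?_⟩
  rw [apply_eq_sub_mul_apply_one hf x, hf0, hg1]
  simp

end LeftDerivation

theorem left_gg_derivation_real_division_algebra_eq_zero_general
    {D : Type*} [DivisionRing D] [Algebra ℝ D]
    (hnc : ∃ a b : D, a * b ≠ b * a)
    (f g : D →ₗ[ℝ] D)
    (hf : ∀ a b : D, f (a * b) = a * g b + b * g a) :
    f = 0 ∧ g = 0 := by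
  obtain ⟨a₀, b₀, hab⟩ := hnc
  obtain ⟨hf0, hg0⟩ := left_derivation_eq_zero_of_exists_mul_ne hf (map_add f) hab
  exact ⟨LinearMap.ext (congrFun hf0), LinearMap.ext (congrFun hg0)⟩

/-- if `D` is a noncommutative finite-dimensional division algebra over `ℝ`
and `f` is a left `{g,g}`-derivation on `D`, then `f = 0` and `g = 0`. -/
theorem left_gg_derivation_real_division_algebra_eq_zero
    {D : Type*} [DivisionRing D] [Algebra ℝ D] [FiniteDimensional ℝ D]
    (hnc : ∃ a b : D, a * b ≠ b * a)
    (f g : D →ₗ[ℝ] D)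
    (hf : ∀ a b : D, f (a * b) = a * g b + b * g a) :
    f = 0 ∧ g = 0 :=
  left_gg_derivation_real_division_algebra_eq_zero_general hnc f g hf
end
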